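/- For every w ∈ ℝⁿ, the function ψ has a gradient at w equal to Qw − Q·Π_S(u(w)); that is, ψ is differentiable everywhere with ∇ψ(w) = Qw − Q Π_S(x − σ(Qw + c)). -/

import Mathlib

/-!
For a metric projection `Π` onto a convex set, `v ↦ ‖v - Π v‖²` is differentiable with gradient
`2 (v - Π v)`: the variational inequality `⟪v - Π v, q - Π v⟫ ≤ 0` bounds the first-order
remainder at `v` below by `0`, and comparing `Π (v + k)` with `Π v` bounds it above by `‖k‖²`.
Hence `‖u‖² - ‖u - Π u‖²` has gradient `2 Π u`, and the chain rule through the affine map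
`w ↦ x - σ (Q w + c)`, together with the symmetry of `Q`, gives the formula for `∇ψ`.
-/

open RealInnerProductSpace

variable {n : ℕ}

/-- `u(w) = x − σ(Qw + c)`. -/
noncomputable def uMap (Q : Matrix (Fin n) (Fin n) ℝ) (c x : EuclideanSpace ℝ (Fin n))
    (σ : ℝ) (w : EuclideanSpace ℝ (Fin n)) : EuclideanSpace ℝ (Fin n) :=
  x - σ • (Matrix.toEuclideanLin Q w + c)

/-- The reduced augmented Lagrangian objective
`ψ(w) = ½⟪w,Qw⟫ + (1/2σ)(‖u(w)‖² − ‖u(w) − Π_S(u(w))‖²) − (1/2σ)‖x‖²`,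
where `proj` is the metric projection onto `S`. -/
noncomputable def psi (Q : Matrix (Fin n) (Fin n) ℝ) (c x : EuclideanSpace ℝ (Fin n))
    (σ : ℝ) (proj : EuclideanSpace ℝ (Fin n) → EuclideanSpace ℝ (Fin n))
    (w : EuclideanSpace ℝ (Fin n)) : ℝ :=
  1 / 2 * ⟪w, Matrix.toEuclideanLin Q w⟫ +
    1 / (2 * σ) * (‖uMap Q c x σ w‖ ^ 2 - ‖uMap Q c x σ w - proj (uMap Q c x σ w)‖ ^ 2) -
    1 / (2 * σ) * ‖x‖ ^ 2

section InnerProductSpace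

variable {F : Type*} [NormedAddCommGroup F] [InnerProductSpace ℝ F]

def IsMetricProj (S : Set F) (proj : F → F) : Prop :=
  ∀ v, proj v ∈ S ∧ ∀ q ∈ S, ‖v - proj v‖ ≤ ‖v - q‖

namespace IsMetricProj

variable {S : Set F} {proj : F → F}

theorem inner_sub_proj_sub_proj_nonpos (hS : Convex ℝ S) (hproj : IsMetricProj S proj) (v : F)
    {q : F} (hq : q ∈ S) : ⟪v - proj v, q - proj v⟫ ≤ 0 := by
  have : Nonempty S := ⟨⟨q, hq⟩⟩
  refine (norm_eq_iInf_iff_real_inner_le_zero hS (hproj v).1).mp ?_ q hq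
  refine le_antisymm (le_ciInf fun q => (hproj v).2 q q.2) ?_
  exact ciInf_le (f := fun q : S => ‖v - (q : F)‖)
    ⟨0, Set.forall_mem_range.2 fun _ => norm_nonneg _⟩ ⟨proj v, (hproj v).1⟩

theorem inner_le_sq_norm_sub_proj_add_sub (hS : Convex ℝ S) (hproj : IsMetricProj S proj)
    (v k : F) : 2 * ⟪v - proj v, k⟫ ≤ ‖v + k - proj (v + k)‖ ^ 2 - ‖v - proj v‖ ^ 2 := by
  have hvi := hproj.inner_sub_proj_sub_proj_nonpos hS v (hproj (v + k)).1
  have hsplit : v + k - proj (v + k) = (v - proj v) + (k - (proj (v + k) - proj v)) := by abel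
  rw [hsplit, norm_add_sq_real, inner_sub_right]
  linarith [sq_nonneg ‖k - (proj (v + k) - proj v)‖]

theorem sq_norm_sub_proj_add_le (hproj : IsMetricProj S proj) (v k : F) :
    ‖v + k - proj (v + k)‖ ^ 2 ≤ ‖v - proj v‖ ^ 2 + 2 * ⟪v - proj v, k⟫ + ‖k‖ ^ 2 :=
  calc ‖v + k - proj (v + k)‖ ^ 2 ≤ ‖(v - proj v) + k‖ ^ 2 := by
        gcongr
        rw [sub_add_eq_add_sub]
        exact (hproj (v + k)).2 _ (hproj v).1
    _ = ‖v - proj v‖ ^ 2 + 2 * ⟪v - proj v, k⟫ + ‖k‖ ^ 2 := norm_add_sq_real _ _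

theorem hasGradientAt_sq_norm_sub_proj [CompleteSpace F] (hS : Convex ℝ S)
    (hproj : IsMetricProj S proj) (v : F) :
    HasGradientAt (fun v => ‖v - proj v‖ ^ 2) ((2 : ℝ) • (v - proj v)) v := by
  rw [hasGradientAt_iff_isLittleO_nhds_zero]
  refine (Asymptotics.IsBigO.of_bound 1 (Filter.Eventually.of_forall fun k => ?_)).trans_isLittleO
    (Asymptotics.isLittleO_norm_pow_id one_lt_two)
  have hlower := hproj.inner_le_sq_norm_sub_proj_add_sub hS v k
  have hupper := hproj.sq_norm_sub_proj_add_le v k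
  rw [norm_pow, norm_norm, one_mul, Real.norm_eq_abs, abs_le, real_inner_smul_left]
  constructor <;> linarith

theorem hasGradientAt_sq_norm_sub_sq_norm_sub_proj [CompleteSpace F] (hS : Convex ℝ S)
    (hproj : IsMetricProj S proj) (v : F) :
    HasGradientAt (fun v => ‖v‖ ^ 2 - ‖v - proj v‖ ^ 2) ((2 : ℝ) • proj v) v := by
  rw [hasGradientAt_iff_hasFDerivAt]
  refine ((hasStrictFDerivAt_norm_sq v).hasFDerivAt.sub
    (hproj.hasGradientAt_sq_norm_sub_proj hS v)).congr_fderiv ?_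
  ext k
  simp only [map_smul, map_sub, sub_apply, smul_apply, coe_innerSL_apply, nsmul_eq_mul,
    Nat.cast_ofNat, InnerProductSpace.toDual_apply_apply, smul_eq_mul]
  ring

end IsMetricProj

theorem LinearMap.IsSymmetric.hasGradientAt_half_inner_self [CompleteSpace F] {T : F →L[ℝ] F}
    (hT : (T : F →ₗ[ℝ] F).IsSymmetric) (w : F) :
    HasGradientAt (fun w => 1 / 2 * ⟪w, T w⟫) (T w) w := by
  rw [hasGradientAt_iff_hasFDerivAt]
  refine (((hasFDerivAt_id w).inner ℝ T.hasFDerivAt).const_mul (1 / 2)).congr_fderiv ?_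
  ext h
  have hTwh : ⟪T w, h⟫ = ⟪w, T h⟫ := hT w h
  simp only [one_div, id_eq, _root_.smul_apply, ContinuousLinearMap.comp_apply,
    ContinuousLinearMap.prod_apply, ContinuousLinearMap.id_apply, fderivInnerCLM_apply, smul_eq_mul,
    InnerProductSpace.toDual_apply_apply]
  rw [real_inner_comm (T w) h, hTwh]
  ring

end InnerProductSpace

theorem psi_hasGradientAt_general
    (S : Set (EuclideanSpace ℝ (Fin n)))
    (hSconv : Convex ℝ S)
    (proj : EuclideanSpace ℝ (Fin n) → EuclideanSpace ℝ (Fin n))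
    (hproj : ∀ v, proj v ∈ S ∧ ∀ q ∈ S, ‖v - proj v‖ ≤ ‖v - q‖)
    (Q : Matrix (Fin n) (Fin n) ℝ) (hQ : Q.PosSemidef)
    (c x : EuclideanSpace ℝ (Fin n)) (σ : ℝ) (hσ : 0 < σ)
    (w : EuclideanSpace ℝ (Fin n)) :
    HasGradientAt (psi Q c x σ proj)
      (Matrix.toEuclideanLin Q w - Matrix.toEuclideanLin Q (proj (uMap Q c x σ w))) w := by
  set A := Matrix.toEuclideanLin Q
  have hA : A.IsSymmetric := Matrix.isSymmetric_toEuclideanLin_iff.mpr hQ.1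
  have hu : HasFDerivAt (uMap Q c x σ) (-(σ • A.toContinuousLinearMap)) w :=
    ((A.toContinuousLinearMap.hasFDerivAt.add_const c).const_smul σ).const_sub x
  have hφ := ((IsMetricProj.hasGradientAt_sq_norm_sub_sq_norm_sub_proj hSconv hproj
    (uMap Q c x σ w)).hasFDerivAt.comp w hu).const_mul (1 / (2 * σ))
  have hψ := ((LinearMap.IsSymmetric.hasGradientAt_half_inner_self (T := A.toContinuousLinearMap)
    hA w).hasFDerivAt.add hφ).sub_const (1 / (2 * σ) * ‖x‖ ^ 2)
  rw [hasGradientAt_iff_hasFDerivAt]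
  refine hψ.congr_fderiv ?_
  ext h
  have hsymm := hA (proj (uMap Q c x σ w)) h
  simp only [LinearMap.coe_toContinuousLinearMap', map_smul, ContinuousLinearMap.comp_neg,
    ContinuousLinearMap.comp_smulₛₗ, Real.ringHom_apply, ContinuousLinearMap.smul_comp, smul_neg,
    add_apply, InnerProductSpace.toDual_apply_apply, neg_apply, smul_apply,
    ContinuousLinearMap.comp_apply, smul_eq_mul, map_sub, sub_apply]
  rw [hsymm]
  field_simp
  ring

/-- `ψ` is differentiable everywhere, with gradient `∇ψ(w) = Qw − Q Π_S(x − σ(Qw + c))`. -/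
theorem psi_hasGradientAt
    (S : Set (EuclideanSpace ℝ (Fin n))) (hSne : S.Nonempty) (hScl : IsClosed S)
    (hSconv : Convex ℝ S)
    (proj : EuclideanSpace ℝ (Fin n) → EuclideanSpace ℝ (Fin n))
    (hproj : ∀ v, proj v ∈ S ∧ ∀ q ∈ S, ‖v - proj v‖ ≤ ‖v - q‖)
    (Q : Matrix (Fin n) (Fin n) ℝ) (hQ : Q.PosSemidef)
    (c x : EuclideanSpace ℝ (Fin n)) (σ : ℝ) (hσ : 0 < σ)
    (w : EuclideanSpace ℝ (Fin n)) :
    HasGradientAt (psi Q c x σ proj)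
      (Matrix.toEuclideanLin Q w - Matrix.toEuclideanLin Q (proj (uMap Q c x σ w))) w :=
  psi_hasGradientAt_general S hSconv proj hproj Q hQ c x σ hσ w
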